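/- Let f ∈ ℂ[x,y,z] be homogeneous of degree d ≥ 1 not divisible by z, and g(x,y) = f(x,y,1). Then mdr(g) = mdr(f), where mdr(f) = min{r : AR(f)_r ≠ 0} and mdr(g) = min{r : AR(g)_{≤r} ≠ 0}. Moreover mdr(f) ≤ d − 1. -/

import Mathlib

/-!
Write `θ` for the substitution `z ↦ 1` and `g = θ f`. The map `θ` commutes with `∂x, ∂y`, is
injective on forms of a fixed degree, and every polynomial of degree `≤ r` is `θ` of a form of
degree `r`. Applying `θ` to Euler's identity gives `x g_x + y g_y + θ(f_z) = d g`. Hence a syzygy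
`(a, b, c)` of `f` of degree `r` yields the syzygy `(θa - xθc, θb - yθc, dθc)` of `g`, whose `sdeg`
is the degree of `(dθa, dθb, dθc)`, at most `r`. Conversely an affine syzygy `(α, β, γ)` with
`sdeg ≤ r` gives the degree-`r` homogenizations of `(xγ + dα, yγ + dβ, γ)`: a form of degree
`r + d - 1` whose dehomogenization vanishes by the same identity, hence a syzygy of `f`. Since
`d ≠ 0` neither construction kills a nonzero syzygy. The bound `mdr(f) ≤ d - 1` comes from the
Koszul syzygy `(0, f_z, -f_y)`, replaced by `(0, x^(d-1), 0)` when `f_y = 0`.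
-/

open MvPolynomial

noncomputable section

/-- Dehomogenization `θ : ℂ[x,y,z] → ℂ[x,y]`, `u ↦ u(x,y,1)`. -/
def theta (u : MvPolynomial (Fin 3) ℂ) : MvPolynomial (Fin 2) ℂ :=
  aeval ![X 0, X 1, 1] u

/-- The syzygy-degree `sdeg(α,β,γ) = max(deg(x·γ + d·α), deg(y·γ + d·β), deg γ)`. -/
def sdeg (d : ℕ)
    (ρ : MvPolynomial (Fin 2) ℂ × MvPolynomial (Fin 2) ℂ × MvPolynomial (Fin 2) ℂ) : ℕ :=
  max (totalDegree (X 0 * ρ.2.2 + (d : MvPolynomial (Fin 2) ℂ) * ρ.1))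
    (max (totalDegree (X 1 * ρ.2.2 + (d : MvPolynomial (Fin 2) ℂ) * ρ.2.1))
      (totalDegree ρ.2.2))

/-- `mdr(f) = min{r : AR(f)_r ≠ 0}`. -/
def mdrf (f : MvPolynomial (Fin 3) ℂ) : ℕ :=
  sInf {r : ℕ | ∃ ρ : MvPolynomial (Fin 3) ℂ × MvPolynomial (Fin 3) ℂ × MvPolynomial (Fin 3) ℂ,
    ρ ≠ 0 ∧
    ρ.1 * pderiv (0 : Fin 3) f + ρ.2.1 * pderiv (1 : Fin 3) f + ρ.2.2 * pderiv (2 : Fin 3) f = 0 ∧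
    ρ.1.IsHomogeneous r ∧ ρ.2.1.IsHomogeneous r ∧ ρ.2.2.IsHomogeneous r}

/-- `mdr(g) = min{r : AR(g)_{≤ r} ≠ 0}`. -/
def mdrg (g : MvPolynomial (Fin 2) ℂ) (d : ℕ) : ℕ :=
  sInf {r : ℕ | ∃ ρ : MvPolynomial (Fin 2) ℂ × MvPolynomial (Fin 2) ℂ × MvPolynomial (Fin 2) ℂ,
    ρ ≠ 0 ∧
    ρ.1 * pderiv (0 : Fin 2) g + ρ.2.1 * pderiv (1 : Fin 2) g + ρ.2.2 * g = 0 ∧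
    sdeg d ρ ≤ r}

namespace Dehomogenization

def affineExponent (m : Fin 3 →₀ ℕ) : Fin 2 →₀ ℕ :=
  Finsupp.equivFunOnFinite.symm ![m 0, m 1]

def homogenizeExponent (r : ℕ) (n : Fin 2 →₀ ℕ) : Fin 3 →₀ ℕ :=
  Finsupp.equivFunOnFinite.symm ![n 0, n 1, r - n.degree]

@[simp] lemma affineExponent_apply (m : Fin 3 →₀ ℕ) (i : Fin 2) :
    affineExponent m i = ![m 0, m 1] i := rfl

@[simp] lemma homogenizeExponent_apply (r : ℕ) (n : Fin 2 →₀ ℕ) (i : Fin 3) :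
    homogenizeExponent r n i = ![n 0, n 1, r - n.degree] i := rfl

lemma degree_fin_two (n : Fin 2 →₀ ℕ) : n.degree = n 0 + n 1 := by
  rw [Finsupp.degree_eq_sum, Fin.sum_univ_two]

lemma degree_fin_three (m : Fin 3 →₀ ℕ) : m.degree = m 0 + m 1 + m 2 := by
  rw [Finsupp.degree_eq_sum, Fin.sum_univ_three]

@[simp] lemma affineExponent_homogenizeExponent (r : ℕ) (n : Fin 2 →₀ ℕ) :
    affineExponent (homogenizeExponent r n) = n := by
  ext i; fin_cases i <;> simp

lemma degree_homogenizeExponent {r : ℕ} {n : Fin 2 →₀ ℕ} (h : n.degree ≤ r) :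
    (homogenizeExponent r n).degree = r := by
  rw [degree_fin_three]
  change n 0 + n 1 + (r - n.degree) = r
  rw [degree_fin_two] at h ⊢
  omega

lemma degree_affineExponent (m : Fin 3 →₀ ℕ) : (affineExponent m).degree + m 2 = m.degree := by
  simp [degree_fin_two, degree_fin_three]

lemma affineExponent_injOn (r : ℕ) :
    Set.InjOn affineExponent {m : Fin 3 →₀ ℕ | m.degree = r} := by
  intro m hm m' hm' h
  have h0 : m 0 = m' 0 := DFunLike.congr_fun h 0
  have h1 : m 1 = m' 1 := DFunLike.congr_fun h 1
  simp only [Set.mem_ofPred_eq, degree_fin_three] at hm hm'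
  ext i; fin_cases i <;> simp <;> omega

variable {R : Type*} [CommSemiring R]

variable (R) in
def dehomogenize : MvPolynomial (Fin 3) R →ₐ[R] MvPolynomial (Fin 2) R :=
  aeval ![X 0, X 1, 1]

lemma dehomogenize_monomial (m : Fin 3 →₀ ℕ) (c : R) :
    dehomogenize R (monomial m c) = monomial (affineExponent m) c := by
  rw [dehomogenize, aeval_monomial, monomial_eq, Finsupp.prod_fintype _ _ (fun _ => pow_zero _),
    Finsupp.prod_fintype _ _ (fun _ => pow_zero _), Fin.prod_univ_three, Fin.prod_univ_two]
  simp [algebraMap_eq]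

lemma dehomogenize_eq_sum (u : MvPolynomial (Fin 3) R) :
    dehomogenize R u = ∑ m ∈ u.support, monomial (affineExponent m) (coeff m u) := by
  conv_lhs => rw [u.as_sum]
  simp only [map_sum, dehomogenize_monomial]

lemma coeff_affineExponent_dehomogenize {r : ℕ} {u : MvPolynomial (Fin 3) R}
    (hu : u.IsHomogeneous r) {m : Fin 3 →₀ ℕ} (hm : m.degree = r) :
    coeff (affineExponent m) (dehomogenize R u) = coeff m u := by
  classical
  rw [dehomogenize_eq_sum, coeff_sum, Finset.sum_eq_single m]
  · rw [coeff_monomial, if_pos rfl]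
  · intro m' hm' hne
    have hm'r : m'.degree = r := by
      rw [Finsupp.degree_eq_weight_one]; exact hu (mem_support_iff.mp hm')
    rw [coeff_monomial, if_neg fun h => hne (affineExponent_injOn r hm'r hm h)]
  · intro hm
    rw [notMem_support_iff.mp hm, map_zero, coeff_zero]

lemma _root_.MvPolynomial.IsHomogeneous.eq_zero_of_dehomogenize_eq_zero {r : ℕ}
    {u : MvPolynomial (Fin 3) R} (hu : u.IsHomogeneous r) (h : dehomogenize R u = 0) : u = 0 := by
  ext m
  by_cases hm : m.degree = r
  · rw [← coeff_affineExponent_dehomogenize hu hm, h, coeff_zero, coeff_zero]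
  · rw [hu.coeff_eq_zero hm, coeff_zero]

lemma totalDegree_dehomogenize_le (u : MvPolynomial (Fin 3) R) :
    (dehomogenize R u).totalDegree ≤ u.totalDegree := by
  rw [dehomogenize_eq_sum]
  refine totalDegree_finsetSum_le fun m hm => (totalDegree_monomial_le _ _).trans ?_
  exact (Nat.le.intro (degree_affineExponent m)).trans (le_totalDegree hm)

lemma pderiv_dehomogenize (i : Fin 2) (u : MvPolynomial (Fin 3) R) :
    pderiv i (dehomogenize R u) = dehomogenize R (pderiv i.castSucc u) := by
  induction u using MvPolynomial.induction_on with
  | C a => simp [dehomogenize]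
  | add p q hp hq => simp only [map_add, hp, hq]
  | mul_X p j hp =>
    have hX : pderiv i (dehomogenize R (X j)) = dehomogenize R (pderiv i.castSucc (X j)) := by
      fin_cases i <;> fin_cases j <;> simp [dehomogenize, pderiv_X]
    rw [map_mul, pderiv_mul, hp, hX, pderiv_mul, map_add, map_mul, map_mul]

lemma dehomogenize_euler {d : ℕ} {f : MvPolynomial (Fin 3) R} (hf : f.IsHomogeneous d) :
    X 0 * dehomogenize R (pderiv 0 f) + X 1 * dehomogenize R (pderiv 1 f)
      + dehomogenize R (pderiv 2 f) = (d : MvPolynomial (Fin 2) R) * dehomogenize R f := by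
  simpa [Fin.sum_univ_three, dehomogenize, nsmul_eq_mul] using
    congrArg (dehomogenize R) hf.sum_X_mul_pderiv

def homogenize (r : ℕ) (p : MvPolynomial (Fin 2) R) : MvPolynomial (Fin 3) R :=
  ∑ n ∈ p.support, monomial (homogenizeExponent r n) (coeff n p)

@[simp] lemma dehomogenize_homogenize (r : ℕ) (p : MvPolynomial (Fin 2) R) :
    dehomogenize R (homogenize r p) = p := by
  simp only [homogenize, map_sum, dehomogenize_monomial, affineExponent_homogenizeExponent]
  exact p.as_sum.symm

lemma isHomogeneous_homogenize {r : ℕ} {p : MvPolynomial (Fin 2) R} (h : p.totalDegree ≤ r) :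
    (homogenize r p).IsHomogeneous r :=
  IsHomogeneous.sum _ _ _ fun _ hn =>
    isHomogeneous_monomial _ (degree_homogenizeExponent ((le_totalDegree hn).trans h))

end Dehomogenization

open Dehomogenization

lemma totalDegree_natCast_mul_le {σ R : Type*} [CommSemiring R] (n : ℕ) (p : MvPolynomial σ R) :
    ((n : MvPolynomial σ R) * p).totalDegree ≤ p.totalDegree := by
  rw [← nsmul_eq_mul]
  exact totalDegree_smul_le n p

/-- `AR(f)_r ≠ 0`. -/
def HasHomogeneousSyzygy (f : MvPolynomial (Fin 3) ℂ) (r : ℕ) : Prop :=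
  ∃ ρ : MvPolynomial (Fin 3) ℂ × MvPolynomial (Fin 3) ℂ × MvPolynomial (Fin 3) ℂ,
    ρ ≠ 0 ∧
    ρ.1 * pderiv (0 : Fin 3) f + ρ.2.1 * pderiv (1 : Fin 3) f + ρ.2.2 * pderiv (2 : Fin 3) f = 0 ∧
    ρ.1.IsHomogeneous r ∧ ρ.2.1.IsHomogeneous r ∧ ρ.2.2.IsHomogeneous r

/-- `AR(g)_{≤ r} ≠ 0`. -/
def HasAffineSyzygy (g : MvPolynomial (Fin 2) ℂ) (d r : ℕ) : Prop :=
  ∃ ρ : MvPolynomial (Fin 2) ℂ × MvPolynomial (Fin 2) ℂ × MvPolynomial (Fin 2) ℂ,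
    ρ ≠ 0 ∧
    ρ.1 * pderiv (0 : Fin 2) g + ρ.2.1 * pderiv (1 : Fin 2) g + ρ.2.2 * g = 0 ∧
    sdeg d ρ ≤ r

section Syzygies

variable {f : MvPolynomial (Fin 3) ℂ} {d r : ℕ}

local notation "θ" => Dehomogenization.dehomogenize ℂ

theorem hasAffineSyzygy_of_hasHomogeneousSyzygy (hd : d ≠ 0) (hf : f.IsHomogeneous d)
    (h : HasHomogeneousSyzygy f r) : HasAffineSyzygy (θ f) d r := by
  obtain ⟨⟨a, b, c⟩, hne, hsyz, ha, hb, hc⟩ := h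
  dsimp only at hsyz ha hb hc
  have hd' : (d : MvPolynomial (Fin 2) ℂ) ≠ 0 := Nat.cast_ne_zero.mpr hd
  have hdeg {u : MvPolynomial (Fin 3) ℂ} (hu : u.IsHomogeneous r) :
      ((d : MvPolynomial (Fin 2) ℂ) * θ u).totalDegree ≤ r :=
    (totalDegree_natCast_mul_le _ _).trans
      ((totalDegree_dehomogenize_le _).trans hu.totalDegree_le)
  refine ⟨(θ a - X 0 * θ c, θ b - X 1 * θ c, d * θ c), ?_, ?_, ?_⟩
  · rintro h0
    obtain ⟨h1, h2, h3⟩ : θ a - X 0 * θ c = 0 ∧ θ b - X 1 * θ c = 0 ∧ d * θ c = 0 := by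
      simpa using h0
    have hc0 : θ c = 0 := (mul_eq_zero.mp h3).resolve_left hd'
    rw [hc0, mul_zero, sub_zero] at h1 h2
    exact hne (by simp [ha.eq_zero_of_dehomogenize_eq_zero h1,
      hb.eq_zero_of_dehomogenize_eq_zero h2, hc.eq_zero_of_dehomogenize_eq_zero hc0])
  · have hsyz' := congrArg θ hsyz
    simp only [map_add, map_mul, map_zero] at hsyz'
    simp only [pderiv_dehomogenize, Fin.castSucc_zero, Fin.castSucc_one]
    linear_combination hsyz' - θ c * dehomogenize_euler hf
  · dsimp only [sdeg]
    refine max_le ?_ (max_le ?_ (hdeg hc))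
    · exact (congrArg totalDegree (by ring)).trans_le (hdeg ha)
    · exact (congrArg totalDegree (by ring)).trans_le (hdeg hb)

theorem hasHomogeneousSyzygy_of_hasAffineSyzygy (hd : d ≠ 0) (hf : f.IsHomogeneous d)
    (h : HasAffineSyzygy (θ f) d r) : HasHomogeneousSyzygy f r := by
  obtain ⟨⟨p, q, s⟩, hne, hsyz, hdeg⟩ := h
  simp only [pderiv_dehomogenize, Fin.castSucc_zero, Fin.castSucc_one] at hsyz
  have hd' : (d : MvPolynomial (Fin 2) ℂ) ≠ 0 := Nat.cast_ne_zero.mpr hd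
  set α : MvPolynomial (Fin 2) ℂ := X 0 * s + (d : MvPolynomial (Fin 2) ℂ) * p
  set β : MvPolynomial (Fin 2) ℂ := X 1 * s + (d : MvPolynomial (Fin 2) ℂ) * q
  obtain ⟨hα, hβ, hs⟩ : α.totalDegree ≤ r ∧ β.totalDegree ≤ r ∧ s.totalDegree ≤ r := by
    simpa [sdeg] using hdeg
  refine ⟨(homogenize r α, homogenize r β, homogenize r s), ?_, ?_,
    isHomogeneous_homogenize hα, isHomogeneous_homogenize hβ, isHomogeneous_homogenize hs⟩
  · rintro h0
    obtain ⟨h1, h2, h3⟩ : homogenize r α = 0 ∧ homogenize r β = 0 ∧ homogenize r s = 0 := by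
      simpa using h0
    have hs0 : s = 0 := by simpa using congrArg θ h3
    have hp0 : d * p = 0 := by simpa [α, hs0] using congrArg θ h1
    have hq0 : d * q = 0 := by simpa [β, hs0] using congrArg θ h2
    exact hne (by simp [hs0, (mul_eq_zero.mp hp0).resolve_left hd',
      (mul_eq_zero.mp hq0).resolve_left hd'])
  · refine IsHomogeneous.eq_zero_of_dehomogenize_eq_zero (r := r + (d - 1)) ?_ ?_
    · exact ((isHomogeneous_homogenize hα).mul hf.pderiv).add
        ((isHomogeneous_homogenize hβ).mul hf.pderiv) |>.add
        ((isHomogeneous_homogenize hs).mul hf.pderiv)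
    · simp only [map_add, map_mul, dehomogenize_homogenize]
      linear_combination (d : MvPolynomial (Fin 2) ℂ) * hsyz + s * dehomogenize_euler hf

theorem hasAffineSyzygy_dehomogenize_iff (hd : d ≠ 0) (hf : f.IsHomogeneous d) :
    HasAffineSyzygy (θ f) d r ↔ HasHomogeneousSyzygy f r :=
  ⟨hasHomogeneousSyzygy_of_hasAffineSyzygy hd hf, hasAffineSyzygy_of_hasHomogeneousSyzygy hd hf⟩

theorem hasHomogeneousSyzygy_sub_one (hf : f.IsHomogeneous d) :
    HasHomogeneousSyzygy f (d - 1) := by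
  by_cases hy : pderiv 1 f = 0
  · exact ⟨(0, X 0 ^ (d - 1), 0), by simp, by simp [hy], isHomogeneous_zero _ _ _,
      isHomogeneous_X_pow _ _, isHomogeneous_zero _ _ _⟩
  · exact ⟨(0, pderiv 2 f, -pderiv 1 f), by simp [hy], by ring, isHomogeneous_zero _ _ _,
      hf.pderiv, hf.pderiv.neg⟩

end Syzygies

theorem mdr_affine_eq_mdr_projective (f : MvPolynomial (Fin 3) ℂ) (d : ℕ) (hd : 1 ≤ d)
    (hf : f.IsHomogeneous d) :
    mdrg (theta f) d = mdrf f ∧ mdrf f ≤ d - 1 := by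
  have hd0 : d ≠ 0 := Nat.one_le_iff_ne_zero.mp hd
  exact ⟨congrArg sInf (Set.ext fun _ => hasAffineSyzygy_dehomogenize_iff hd0 hf),
    Nat.sInf_le (hasHomogeneousSyzygy_sub_one hf)⟩
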